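/- Suppose θ_*[κ] is a parametric symbolic memory satisfying θ_*[κ] ≡ θ^κ for all κ ≥ 0, and define the parametric exit state θ_x[κ] = θ_*[κ] ⋄ θ̂ and φ_x[κ] = (0 ≤ κ ∧ ∀τ(0 ≤ τ < κ → θ_*[τ]⟨φ⟩)) ∧ θ_*[κ]⟨φ̂⟩. Then for every ν ≥ 0 the node w reached by ν core iterations followed by the exit satisfies w.θ ≡ θ_u ⋄ θ_x[ν] and w.φ ≡ φ_u ∧ θ_u⟨φ_x[ν]⟩; that is, w.s ≡ u.s ⋄ (l_x, θ_x[ν], φ_x[ν]). -/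

import Mathlib

/-- A program state: location, symbolic memory, path condition. -/
structure PState (Loc Var : Type) where
  loc : Loc
  mem : (Var → ℤ) → (Var → ℤ)
  pc  : (Var → ℤ) → Prop

/-- State composition `s₁ ⋄ s₂ = (l₂, θ₁ ⋄ θ₂, φ₁ ∧ θ₁⟨φ₂⟩)`. -/
def scomp {Loc Var : Type} (s₁ s₂ : PState Loc Var) : PState Loc Var :=
  ⟨s₂.loc, fun v => s₂.mem (s₁.mem v), fun v => s₁.pc v ∧ s₂.pc (s₁.mem v)⟩

/-- State equivalence. -/
def sequiv {Loc Var : Type} (s₁ s₂ : PState Loc Var) : Prop :=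
  s₁.loc = s₂.loc ∧ (∀ v, s₁.mem v = s₂.mem v) ∧ (∀ v, s₁.pc v ↔ s₂.pc v)

/-- The node reached from `u` by `i` executions of the iteration state `it`. -/
def iterState {Loc Var : Type} (u it : PState Loc Var) : ℕ → PState Loc Var
  | 0 => u
  | n + 1 => scomp (iterState u it n) it

/-!
The `n`-th iterate of a loop body `(l, θ, φ)` from `u` has memory `θⁿ ∘ θ_u` and a path condition
that conjoins `φ_u` with `φ` evaluated before each of the `n` passes; composing with the exit
state then only appends `θ̂` and `φ̂` evaluated at `θ^ν ∘ θ_u`.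
-/

section

variable {Loc Var : Type}

theorem iterState_mem (u it : PState Loc Var) (n : ℕ) (v : Var → ℤ) :
    (iterState u it n).mem v = it.mem^[n] (u.mem v) := by
  induction n with
  | zero => rfl
  | succ n ih => simp only [iterState, scomp, ih, Function.iterate_succ_apply']

theorem iterState_pc (u it : PState Loc Var) (n : ℕ) (v : Var → ℤ) :
    (iterState u it n).pc v ↔ u.pc v ∧ ∀ τ < n, it.pc (it.mem^[τ] (u.mem v)) := by
  induction n with
  | zero => simp [iterState]
  | succ n ih => simp only [iterState, scomp, ih, iterState_mem, Nat.forall_lt_succ_right, and_assoc]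

end

/-- If `θ_*[κ] ≡ θ^κ` for all `κ ≥ 0`, and the parametric exit state is
`θ_x[κ] = θ_*[κ] ⋄ θ̂`, `φ_x[κ] = (0 ≤ κ ∧ ∀τ(0 ≤ τ < κ → θ_*[τ]⟨φ⟩)) ∧ θ_*[κ]⟨φ̂⟩`,
then for every `ν ≥ 0` the node `w` reached by `ν` core iterations followed by
the exit satisfies `w.s ≡ u.s ⋄ (l_x, θ_x[ν], φ_x[ν])`. -/
theorem template_exit_equiv {Loc Var : Type} (le lx : Loc)
    (θu θ θhat : (Var → ℤ) → (Var → ℤ))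
    (φu φ φhat : (Var → ℤ) → Prop)
    (θstar : ℕ → (Var → ℤ) → (Var → ℤ))
    (hstar : ∀ (κ : ℕ) (v : Var → ℤ), θstar κ v = (θ^[κ]) v)
    (ν : ℕ) :
    let u : PState Loc Var := ⟨le, θu, φu⟩
    let w : PState Loc Var := scomp (iterState u ⟨le, θ, φ⟩ ν) ⟨lx, θhat, φhat⟩
    let θx : (Var → ℤ) → (Var → ℤ) := fun v => θhat (θstar ν v)
    let φx : (Var → ℤ) → Prop := fun v =>
      ((0 ≤ ν ∧ ∀ τ, τ < ν → φ (θstar τ v)) ∧ φhat (θstar ν v))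
    sequiv w (scomp u ⟨lx, θx, φx⟩) := by
  intro u w θx φx
  refine ⟨rfl, fun v => ?_, fun v => ?_⟩
  · simp only [w, u, θx, scomp, iterState_mem, hstar]
  · simp only [w, u, φx, scomp, iterState_pc, iterState_mem, hstar, Nat.zero_le, true_and,
      and_assoc]
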